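/- Let C_1,...,C_m be closed convex subsets of a real Hilbert space H with C := ∩C_i ≠ ∅, and let y_k := (P_{C_m} ⋯ P_{C_1})^k(y_0). Then for every k ≥ 1, max_{1≤i≤m} d(y_k, C_i)² ≤ m·‖y_k − y_{k−1}‖·d(y_{k−1}, C). -/

import Mathlib

set_option maxHeartbeats 1000000


noncomputable section
open Filter Metric

variable {H : Type} [NormedAddCommGroup H] [InnerProductSpace ℝ H] [CompleteSpace H]

/-- `cyclicComp P j` is the composition of the first `j` of the maps `P 0, …, P (m-1)`
(with `P 0` applied first).  In particular `cyclicComp P m = P_{C_m} ∘ ⋯ ∘ P_{C_1}` is one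
full sweep of the method of cyclic projections, and `cyclicComp P i` is the partial
product `Q_i = P_{C_i} ⋯ P_{C_1}` (with `cyclicComp P 0 = Q_0 = I`). -/
def cyclicComp {m : ℕ} (P : Fin m → H → H) (j : ℕ) : H → H :=
  fun x => ((List.ofFn P).take j).foldl (fun a p => p a) x

/-- `P i` is the metric (nearest-point) projection onto the set `C i`, for each `i`. -/
def IsMetricProj {m : ℕ} (C : Fin m → Set H) (P : Fin m → H → H) : Prop :=
  ∀ i x, P i x ∈ C i ∧ ∀ y ∈ C i, ‖x - P i x‖ ≤ ‖x - y‖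

open RealInnerProductSpace

/-- The variational characterization of the metric projection. -/
lemma metricProj_inner_le {m : ℕ} {C : Fin m → Set H} {P : Fin m → H → H}
    (hconv : ∀ i, Convex ℝ (C i)) (hP : IsMetricProj C P) (i : Fin m) (w : H)
    {z : H} (hz : z ∈ C i) : ⟪w - P i w, z - P i w⟫ ≤ 0 := by
  obtain ⟨hmem, hmin⟩ := hP i w
  haveI : Nonempty ↥(C i) := ⟨⟨P i w, hmem⟩⟩
  have hbdd : BddBelow (Set.range fun v : C i => ‖w - v‖) :=
    ⟨0, by rintro r ⟨v, rfl⟩; exact norm_nonneg _⟩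
  have hinf : ‖w - P i w‖ = ⨅ v : C i, ‖w - v‖ := by
    refine le_antisymm (le_ciInf fun v => hmin v v.2) ?_
    exact ciInf_le hbdd ⟨P i w, hmem⟩
  exact (norm_eq_iInf_iff_real_inner_le_zero (hconv i) hmem).1 hinf z hz

lemma cyclicComp_zero {m : ℕ} (P : Fin m → H → H) (x : H) : cyclicComp P 0 x = x := rfl

lemma cyclicComp_succ {m : ℕ} (P : Fin m → H → H) {j : ℕ} (hj : j < m) (x : H) :
    cyclicComp P (j + 1) x = P ⟨j, hj⟩ (cyclicComp P j x) := by
  unfold cyclicComp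
  have hlen : j < (List.ofFn P).length := by simpa using hj
  rw [List.take_succ, List.getElem?_eq_getElem hlen]
  simp [List.foldl_append, List.getElem_ofFn]

/-- For closed convex sets `C₁,…,Cₘ` with nonempty intersection `C`, the
cyclic projection iterates satisfy, for every `k ≥ 1` (here `k+1` plays the role of `k`):
`max_i d(y_k, Cᵢ)² ≤ m·‖y_k − y_{k−1}‖·d(y_{k−1}, C)`. -/
theorem max_sq_dist_le_increment {m : ℕ} (hm : 0 < m) (C : Fin m → Set H)
    (hconv : ∀ i, Convex ℝ (C i)) (hclosed : ∀ i, IsClosed (C i))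
    (hne : (⋂ i, C i).Nonempty)
    (P : Fin m → H → H) (hP : IsMetricProj C P) (y₀ : H) (k : ℕ) :
    (⨆ i : Fin m, infDist ((cyclicComp P m)^[k + 1] y₀) (C i) ^ 2) ≤
      (m : ℝ) * ‖(cyclicComp P m)^[k + 1] y₀ - (cyclicComp P m)^[k] y₀‖ *
        infDist ((cyclicComp P m)^[k] y₀) (⋂ i, C i) := by
  haveI : Nonempty (Fin m) := Fin.pos_iff_nonempty.mp hm
  set x := (cyclicComp P m)^[k] y₀ with hxdef
  have hy1 : (cyclicComp P m)^[k + 1] y₀ = cyclicComp P m x := by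
    rw [Function.iterate_succ_apply']
  set y := (cyclicComp P m)^[k + 1] y₀ with hydef
  set t := ‖y - x‖ with htdef
  have ht0 : 0 ≤ t := norm_nonneg _
  -- the partial sweep points
  set g : ℕ → H := fun j => cyclicComp P j x with hgdef
  have hg0 : g 0 = x := rfl
  have hgm : y = g m := hy1
  have hgs : ∀ j (hj : j < m), g (j + 1) = P ⟨j, hj⟩ (g j) := fun j hj =>
    cyclicComp_succ P hj x
  set Δ : ℕ → H := fun j => g j - g (j + 1) with hΔdef
  have htel : ∀ n, ∑ j ∈ Finset.range n, Δ j = g 0 - g n := fun n =>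
    Finset.sum_range_sub' g n
  have ht' : t = ‖g 0 - g m‖ := by rw [hg0, ← hgm, norm_sub_rev]
  -- the key pointwise estimate
  have key : ∀ c ∈ ⋂ i, C i, ∀ i : Fin m,
      infDist y (C i) ^ 2 ≤ (m : ℝ) * t * dist x c := by
    intro c hc i
    have hci : ∀ j : Fin m, c ∈ C j := by simpa [Set.mem_iInter] using hc
    -- variational inequality at each step
    have hVI : ∀ j (hj : j < m), 0 ≤ ⟪Δ j, g (j + 1) - c⟫ := by
      intro j hj
      have h := metricProj_inner_le hconv hP ⟨j, hj⟩ (g j) (hci ⟨j, hj⟩)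
      rw [← hgs j hj] at h
      have h2 : ⟪Δ j, c - g (j + 1)⟫ ≤ 0 := h
      have h3 : ⟪Δ j, -(g (j + 1) - c)⟫ ≤ 0 := by rwa [neg_sub]
      rw [inner_neg_right] at h3
      linarith
    -- Fejér-type step estimate
    have hF2 : ∀ j (hj : j < m),
        ‖Δ j‖ ^ 2 + ‖g (j + 1) - c‖ ^ 2 ≤ ‖g j - c‖ ^ 2 := by
      intro j hj
      have hd : g j - c = Δ j + (g (j + 1) - c) := by
        simp only [hΔdef]; abel
      have hexp := norm_add_sq_real (Δ j) (g (j + 1) - c)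
      rw [← hd] at hexp
      nlinarith [hVI j hj]
    have hsum : ∀ r, r ≤ m →
        ∑ j ∈ Finset.range r, ‖Δ j‖ ^ 2 ≤ ‖g 0 - c‖ ^ 2 - ‖g r - c‖ ^ 2 := by
      intro r
      induction r with
      | zero => intro _; simp
      | succ n ih =>
        intro hr
        rw [Finset.sum_range_succ]
        have h1 := ih (Nat.le_of_succ_le hr)
        have h2 := hF2 n hr
        linarith
    -- index bookkeeping
    set ι := (i : ℕ) + 1 with hιdef
    have hι : ι ≤ m := i.2
    have hmemι : g ι ∈ C i := by
      have h1 := hgs i.1 i.2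
      have h2 := (hP ⟨i.1, i.2⟩ (g i.1)).1
      rw [← h1] at h2
      simpa using h2
    set s := g ι - g m with hsdef
    set Q := ∑ j ∈ Finset.Ico ι m, ‖Δ j‖ ^ 2 with hQdef
    set Pp := ∑ j ∈ Finset.range ι, ‖Δ j‖ ^ 2 with hPpdef
    set T := ∑ j ∈ Finset.range ι, ‖Δ j‖ with hTdef
    have hQ0 : 0 ≤ Q := Finset.sum_nonneg fun _ _ => sq_nonneg _
    have hPp0 : 0 ≤ Pp := Finset.sum_nonneg fun _ _ => sq_nonneg _
    have hT0 : 0 ≤ T := Finset.sum_nonneg fun _ _ => norm_nonneg _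
    have hsIco : s = ∑ j ∈ Finset.Ico ι m, Δ j := by
      rw [Finset.sum_Ico_eq_sub _ hι, htel m, htel ι, hsdef]; abel
    -- Cauchy–Schwarz for the tail
    have hcs : ∀ (F : Finset ℕ), (∑ j ∈ F, ‖Δ j‖) ^ 2 ≤ (F.card : ℝ) * ∑ j ∈ F, ‖Δ j‖ ^ 2 := by
      intro F
      have := Finset.sum_mul_sq_le_sq_mul_sq F (fun _ => (1 : ℝ)) (fun j => ‖Δ j‖)
      simpa using this
    have hB1 : ‖s‖ ^ 2 ≤ ((m : ℝ) - ι) * Q := by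
      have h1 : ‖s‖ ≤ ∑ j ∈ Finset.Ico ι m, ‖Δ j‖ := by
        rw [hsIco]; exact norm_sum_le _ _
      have h2 : (∑ j ∈ Finset.Ico ι m, ‖Δ j‖) ^ 2 ≤ ((m : ℝ) - ι) * Q := by
        have h3 := hcs (Finset.Ico ι m)
        rwa [Nat.card_Ico, Nat.cast_sub hι] at h3
      calc ‖s‖ ^ 2 ≤ (∑ j ∈ Finset.Ico ι m, ‖Δ j‖) ^ 2 :=
            pow_le_pow_left₀ (norm_nonneg _) h1 2
        _ ≤ _ := h2
    have hT2 : T ^ 2 ≤ (ι : ℝ) * Pp := by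
      have h3 := hcs (Finset.range ι)
      rwa [Finset.card_range] at h3
    have hstT : ‖s‖ ≤ t + T := by
      have h1 : s = (g 0 - g m) - (g 0 - g ι) := by rw [hsdef]; abel
      have h2 : ‖g 0 - g ι‖ ≤ T := by
        rw [← htel ι]; exact norm_sum_le _ _
      calc ‖s‖ ≤ ‖g 0 - g m‖ + ‖g 0 - g ι‖ := by rw [h1]; exact norm_sub_le _ _
        _ ≤ t + T := by rw [← ht']; linarith
    have hι1 : (1 : ℝ) ≤ (ι : ℝ) := by exact_mod_cast Nat.one_le_iff_ne_zero.mpr (by omega)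
    have hB2 : ‖s‖ ^ 2 ≤ ((ι : ℝ) + 1) * (t ^ 2 + Pp) := by
      have h0 : ‖s‖ ^ 2 ≤ (t + T) ^ 2 := pow_le_pow_left₀ (norm_nonneg _) hstT 2
      have h4 : ((ι : ℝ) + 1) * T ^ 2 ≤ ((ι : ℝ) + 1) * ((ι : ℝ) * Pp) :=
        mul_le_mul_of_nonneg_left hT2 (by positivity)
      nlinarith [sq_nonneg ((ι : ℝ) * t - T), h0, h4]
    -- the Fejér sum estimate
    set a := ‖g 0 - c‖ with hadef
    set b := ‖g m - c‖ with hbdef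
    have ha0 : 0 ≤ a := norm_nonneg _
    have hb0 : 0 ≤ b := norm_nonneg _
    have hPQ : Pp + Q = ∑ j ∈ Finset.range m, ‖Δ j‖ ^ 2 :=
      Finset.sum_range_add_sum_Ico _ hι
    have hsum' : Pp + Q ≤ a ^ 2 - b ^ 2 := by
      rw [hPQ]; exact hsum m le_rfl
    have hab : a ≤ t + b := by
      have : g 0 - c = (g 0 - g m) + (g m - c) := by abel
      calc a = ‖(g 0 - g m) + (g m - c)‖ := by rw [hadef, this]
        _ ≤ ‖g 0 - g m‖ + b := norm_add_le _ _
        _ = t + b := by rw [← ht']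
    have hba : t ≤ a + b := by
      have : g 0 - g m = (g 0 - c) - (g m - c) := by abel
      calc t = ‖(g 0 - c) - (g m - c)‖ := by rw [ht', this]
        _ ≤ a + b := norm_sub_le _ _
    have hq : t ^ 2 + (Pp + Q) ≤ 2 * t * a := by nlinarith [hsum', hab, hba, hb0]
    -- combine everything
    have hιm : (ι : ℝ) ≤ (m : ℝ) := by exact_mod_cast hι
    have hM1 : (1 : ℝ) ≤ (m : ℝ) := by exact_mod_cast hm
    have e1 : ((ι : ℝ) + 1) * ‖s‖ ^ 2 ≤ ((ι : ℝ) + 1) * (((m : ℝ) - ι) * Q) :=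
      mul_le_mul_of_nonneg_left hB1 (by positivity)
    have e2 : ((m : ℝ) - ι) * ‖s‖ ^ 2 ≤ ((m : ℝ) - ι) * (((ι : ℝ) + 1) * (t ^ 2 + Pp)) :=
      mul_le_mul_of_nonneg_left hB2 (by linarith)
    have e3 : ((ι : ℝ) + 1) * ((m : ℝ) - ι) * (t ^ 2 + (Pp + Q)) ≤
        ((ι : ℝ) + 1) * ((m : ℝ) - ι) * (2 * t * a) :=
      mul_le_mul_of_nonneg_left hq (mul_nonneg (by positivity) (by linarith))
    have hMS : ((m : ℝ) + 1) * ‖s‖ ^ 2 ≤ ((ι : ℝ) + 1) * ((m : ℝ) - ι) * (2 * t * a) := by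
      nlinarith [e1, e2, e3]
    have e4 : 4 * (((ι : ℝ) + 1) * ((m : ℝ) - ι)) ≤ ((m : ℝ) + 1) ^ 2 := by
      nlinarith [sq_nonneg ((m : ℝ) - 2 * ι - 1)]
    have hta : 0 ≤ t * a := mul_nonneg ht0 ha0
    have e6 : ((ι : ℝ) + 1) * ((m : ℝ) - ι) * (2 * t * a) ≤
        (((m : ℝ) + 1) ^ 2 / 4) * (2 * t * a) := by
      apply mul_le_mul_of_nonneg_right _ (by positivity)
      linarith
    have e7 : ((m : ℝ) + 1) * ‖s‖ ^ 2 ≤ ((m : ℝ) + 1) * (((m : ℝ) + 1) / 2 * (t * a)) :=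
      calc ((m : ℝ) + 1) * ‖s‖ ^ 2 ≤ ((ι : ℝ) + 1) * ((m : ℝ) - ι) * (2 * t * a) := hMS
        _ ≤ (((m : ℝ) + 1) ^ 2 / 4) * (2 * t * a) := e6
        _ = ((m : ℝ) + 1) * (((m : ℝ) + 1) / 2 * (t * a)) := by ring
    have e8 : ‖s‖ ^ 2 ≤ ((m : ℝ) + 1) / 2 * (t * a) :=
      le_of_mul_le_mul_left e7 (by linarith)
    have hfin : ‖s‖ ^ 2 ≤ (m : ℝ) * t * a := by
      have e9 : ((m : ℝ) + 1) / 2 * (t * a) ≤ (m : ℝ) * (t * a) :=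
        mul_le_mul_of_nonneg_right (by linarith) hta
      calc ‖s‖ ^ 2 ≤ ((m : ℝ) + 1) / 2 * (t * a) := e8
        _ ≤ (m : ℝ) * (t * a) := e9
        _ = (m : ℝ) * t * a := by ring
    -- pass to the distance to `C i`
    have hd : infDist y (C i) ≤ ‖s‖ := by
      have h1 := infDist_le_dist_of_mem (x := y) hmemι
      rw [dist_eq_norm] at h1
      calc infDist y (C i) ≤ ‖y - g ι‖ := h1
        _ = ‖s‖ := by rw [hgm, hsdef, norm_sub_rev]
    have hd2 : infDist y (C i) ^ 2 ≤ ‖s‖ ^ 2 := pow_le_pow_left₀ infDist_nonneg hd 2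
    have hac : a = dist x c := by rw [hadef, hg0, dist_eq_norm]
    rw [← hac]
    linarith
  -- conclude, taking the infimum over `c`
  refine ciSup_le fun i => ?_
  rcases eq_or_lt_of_le (by positivity : (0 : ℝ) ≤ (m : ℝ) * t) with h0 | hpos
  · obtain ⟨c₀, hc₀⟩ := hne
    have h1 := key c₀ hc₀ i
    have h2 : (m : ℝ) * t * dist x c₀ = 0 := by rw [← h0]; ring
    have h3 : (m : ℝ) * t * infDist x (⋂ i, C i) = 0 := by rw [← h0]; ring
    rw [h3]; rw [h2] at h1; exact h1
  · haveI : Nonempty ↥(⋂ i, C i) := hne.to_subtype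
    have h1 : infDist y (C i) ^ 2 / ((m : ℝ) * t) ≤ infDist x (⋂ i, C i) := by
      rw [infDist_eq_iInf (s := ⋂ i, C i)]
      refine le_ciInf fun c => ?_
      rw [div_le_iff₀ hpos]
      have h2 := key c c.2 i
      linarith
    calc infDist y (C i) ^ 2 = infDist y (C i) ^ 2 / ((m : ℝ) * t) * ((m : ℝ) * t) := by
          rw [div_mul_cancel₀ _ (ne_of_gt hpos)]
      _ ≤ infDist x (⋂ i, C i) * ((m : ℝ) * t) :=
          mul_le_mul_of_nonneg_right h1 (le_of_lt hpos)
      _ = (m : ℝ) * t * infDist x (⋂ i, C i) := by ring
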